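/- Let V be any vertex algebra and W any V-module. If V is C_2-cofinite (dim V/C_2(V) < ∞) and W is C_2-cofinite (dim W/C_2(W) < ∞), then W is C_n-cofinite for all n ≥ 2. -/

import Mathlib

open scoped DirectSum

noncomputable section


/-- Integer binomial coefficient `C(m, i)` for `m : ℤ`, `i : ℕ`. -/
def intBinom (m : ℤ) (i : ℕ) : ℤ :=
  (∏ j ∈ Finset.range i, (m - (j : ℤ))) / (i.factorial : ℤ)

/-- A vertex algebra over `ℂ`: a complex vector space `V` with a vacuum vector and a
linear state-field correspondence `Y`, `Y(v,x) = ∑ₙ vₙ x^{-n-1}`, satisfying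
truncation, vacuum and creation properties, and Borcherds' commutator and
iterate formulas. -/
structure VertexAlgebra (V : Type*) [AddCommGroup V] [Module ℂ V] where
  /-- the coefficients of vertex operators: `Y u n v = uₙ v`. -/
  Y : V →ₗ[ℂ] ℤ → Module.End ℂ V
  /-- the vacuum vector `𝟏`. -/
  vac : V
  trunc : ∀ u v : V, ∃ N : ℕ, ∀ n : ℤ, (N : ℤ) ≤ n → Y u n v = 0
  vac_act : ∀ (n : ℤ) (v : V), Y vac n v = if n = -1 then v else 0
  create : ∀ u : V, Y u (-1) vac = u
  create_nonneg : ∀ (u : V) (n : ℤ), 0 ≤ n → Y u n vac = 0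
  commutator : ∀ (u v w : V) (m n : ℤ),
    Y u m (Y v n w) - Y v n (Y u m w)
      = ∑ᶠ i : ℕ, intBinom m i • Y (Y u i v) (m + n - i) w
  iterate : ∀ (u v w : V) (m n : ℤ),
    Y (Y u m v) n w
      = ∑ᶠ i : ℕ, ((-1 : ℤ) ^ i * intBinom m i) •
          (Y u (m - i) (Y v (n + i) w)
            - ((((-1 : ℤˣ) ^ m : ℤˣ) : ℤ) • Y v (m + n - i) (Y u i w)))

/-- A module for a vertex algebra. -/
structure VAModule {V : Type*} [AddCommGroup V] [Module ℂ V] (va : VertexAlgebra V)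
    (W : Type*) [AddCommGroup W] [Module ℂ W] where
  /-- the action `act v n w = vₙ w`. -/
  act : V →ₗ[ℂ] ℤ → Module.End ℂ W
  trunc : ∀ (v : V) (w : W), ∃ N : ℕ, ∀ n : ℤ, (N : ℤ) ≤ n → act v n w = 0
  vac_act : ∀ (n : ℤ) (w : W), act va.vac n w = if n = -1 then w else 0
  commutator : ∀ (u v : V) (w : W) (m n : ℤ),
    act u m (act v n w) - act v n (act u m w)
      = ∑ᶠ i : ℕ, intBinom m i • act (va.Y u i v) (m + n - i) w
  iterate : ∀ (u v : V) (w : W) (m n : ℤ),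
    act (va.Y u m v) n w
      = ∑ᶠ i : ℕ, ((-1 : ℤ) ^ i * intBinom m i) •
          (act u (m - i) (act v (n + i) w)
            - ((((-1 : ℤˣ) ^ m : ℤˣ) : ℤ) • act v (m + n - i) (act u i w)))

variable {V : Type*} [AddCommGroup V] [Module ℂ V]

/-- The adjoint module of a vertex algebra. -/
def VertexAlgebra.adjoint (va : VertexAlgebra V) : VAModule va V where
  act := va.Y
  trunc := va.trunc
  vac_act := va.vac_act
  commutator := va.commutator
  iterate := va.iterate

variable {W : Type*} [AddCommGroup W] [Module ℂ W]

/-- `Efilt M n = E_n(W)`: the subspace of `W` spanned by the vectors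
`u⁽¹⁾_{-1-k₁} ⋯ u⁽ʳ⁾_{-1-k_r} w` for `r ≥ 1`, `u⁽ⁱ⁾ ∈ V`, `w ∈ W`, `kᵢ ≥ 0`,
`k₁ + ⋯ + k_r ≥ n`. -/
def Efilt {va : VertexAlgebra V} (M : VAModule va W) (n : ℤ) : Submodule ℂ W :=
  Submodule.span ℂ {x : W | ∃ (L : List (V × ℕ)) (w : W), L ≠ [] ∧
    n ≤ (L.map fun p => ((p.2 : ℤ))).sum ∧
    x = L.foldr (fun p acc => M.act p.1 (-1 - (p.2 : ℤ)) acc) w}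

/-- `Cfilt M n = C_n(W)`: the subspace of `W` spanned by the vectors `v_{-n} w`. -/
def Cfilt {va : VertexAlgebra V} (M : VAModule va W) (n : ℕ) : Submodule ℂ W :=
  Submodule.span ℂ {x : W | ∃ (v : V) (w : W), x = M.act v (-(n : ℤ)) w}
section CnHelpers

variable {V : Type*} [AddCommGroup V] [Module ℂ V] {W : Type*} [AddCommGroup W] [Module ℂ W]
  (va : VertexAlgebra V) (M : VAModule va W)

private lemma intBinom_neg_one (i : ℕ) : intBinom (-1) i = (-1) ^ i := by
  have hp : (∏ j ∈ Finset.range i, ((-1 : ℤ) - (j : ℤ))) = (-1) ^ i * (Nat.factorial i : ℤ) := by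
    induction i with
    | zero => simp
    | succ n ih =>
      rw [Finset.prod_range_succ, ih, Nat.factorial_succ]
      push_cast
      ring
  rw [intBinom, hp, Int.mul_ediv_cancel _ (by positivity)]

private lemma intBinom_neg_two (i : ℕ) : intBinom (-2) i = (-1) ^ i * ((i : ℤ) + 1) := by
  have hp : (∏ j ∈ Finset.range i, ((-2 : ℤ) - (j : ℤ)))
      = (-1) ^ i * (Nat.factorial (i + 1) : ℤ) := by
    induction i with
    | zero => simp
    | succ n ih =>
      rw [Finset.prod_range_succ, ih, Nat.factorial_succ (n + 1)]
      push_cast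
      ring
  rw [intBinom, hp, Nat.factorial_succ]
  push_cast
  rw [show ((-1 : ℤ)) ^ i * (((i : ℤ) + 1) * (Nat.factorial i : ℤ))
      = ((-1) ^ i * ((i : ℤ) + 1)) * (Nat.factorial i : ℤ) by ring]
  exact Int.mul_ediv_cancel _ (by positivity)

private lemma zsmul_mem' (S : Submodule ℂ W) (k : ℤ) {x : W} (h : x ∈ S) : k • x ∈ S := by
  rw [← Int.cast_smul_eq_zsmul ℂ]
  exact S.smul_mem _ h

private lemma finsum_mem' (f : ℕ → W) (S : Submodule ℂ W) (h : ∀ i, f i ∈ S) :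
    (∑ᶠ i, f i) ∈ S := by
  by_cases hf : (Function.support f).Finite
  · rw [finsum_eq_sum f hf]
    exact Submodule.sum_mem S fun i _ => h i
  · rw [finsum_of_infinite_support hf]
    exact S.zero_mem

private lemma finsum_single_mem (f : ℕ → W) (S : Submodule ℂ W) (K i₀ : ℕ) (hi₀ : i₀ < K)
    (hsupp : ∀ i, K ≤ i → f i = 0) (hmem : ∀ i, i ≠ i₀ → f i ∈ S)
    (hsum : (∑ᶠ i, f i) ∈ S) : f i₀ ∈ S := by
  have hss : Function.support f ⊆ ↑(Finset.range K) := by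
    intro i hi
    simp only [Finset.coe_range, Set.mem_Iio]
    by_contra hK
    exact hi (hsupp i (le_of_not_gt hK))
  rw [finsum_eq_finset_sum_of_support_subset f hss] at hsum
  have h2 : f i₀ = (∑ i ∈ Finset.range K, f i) - ∑ i ∈ (Finset.range K).erase i₀, f i :=
    eq_sub_of_add_eq (Finset.add_sum_erase _ f (Finset.mem_range.mpr hi₀))
  rw [h2]
  exact sub_mem hsum (Submodule.sum_mem S fun i hi => hmem i (Finset.ne_of_mem_erase hi))

private lemma mem_cfilt_gen (n : ℕ) (v : V) (w : W) : M.act v (-(n : ℤ)) w ∈ Cfilt M n :=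
  Submodule.subset_span ⟨v, w, rfl⟩

private lemma D_act (q : ℕ) (hq : 1 ≤ q) (v : V) (w : W) :
    M.act (va.Y v (-2) va.vac) (-(q : ℤ)) w = (q : ℤ) • M.act v (-(q : ℤ) - 1) w := by
  have h := M.iterate v va.vac w (-2) (-(q : ℤ))
  rw [finsum_eq_single _ (q - 1) ?_] at h
  · rw [M.vac_act, if_pos (by omega), M.vac_act, if_neg (by omega), smul_zero, sub_zero,
      intBinom_neg_two] at h
    have hc : ((-1 : ℤ)) ^ (q - 1) * ((-1) ^ (q - 1) * (((q - 1 : ℕ) : ℤ) + 1)) = (q : ℤ) := by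
      rw [← mul_assoc, ← pow_add, Even.neg_one_pow ⟨q - 1, by ring⟩]
      omega
    rw [hc, show (-2 - ((q - 1 : ℕ) : ℤ)) = -(q : ℤ) - 1 by omega] at h
    exact h
  · intro b hb
    rw [M.vac_act, if_neg (by omega), M.vac_act, if_neg (by omega)]
    simp

private lemma cfilt_succ_le (q : ℕ) (hq : 1 ≤ q) : Cfilt M (q + 1) ≤ Cfilt M q := by
  refine Submodule.span_le.mpr ?_
  rintro x ⟨v, w, rfl⟩
  have hq0 : (q : ℂ) ≠ 0 := Nat.cast_ne_zero.mpr (by omega)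
  have hmode : (-((q + 1 : ℕ) : ℤ)) = -(q : ℤ) - 1 := by push_cast; ring
  rw [SetLike.mem_coe, hmode]
  have h1 : M.act v (-(q : ℤ) - 1) w = (q : ℂ)⁻¹ • ((q : ℂ) • M.act v (-(q : ℤ) - 1) w) :=
    (inv_smul_smul₀ hq0 _).symm
  have h2 : (q : ℂ) • M.act v (-(q : ℤ) - 1) w
      = M.act (va.Y v (-2) va.vac) (-(q : ℤ)) w := by
    rw [D_act va M q hq v w, ← Int.cast_smul_eq_zsmul ℂ]
    norm_num
  rw [h1, h2]
  exact Submodule.smul_mem _ _ (mem_cfilt_gen va M q _ w)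

private lemma cfilt_le (p q : ℕ) (hp : 1 ≤ p) (hpq : p ≤ q) : Cfilt M q ≤ Cfilt M p := by
  induction q, hpq using Nat.le_induction with
  | base => exact le_rfl
  | succ n hn ih => exact (cfilt_succ_le va M n (hp.trans hn)).trans ih

private lemma act_mode_mem (p : ℕ) (hp : 1 ≤ p) (v : V) (e : ℤ) (he : e ≤ -(p : ℤ)) (w : W) :
    M.act v e w ∈ Cfilt M p := by
  have h1 : e = -((e.natAbs : ℕ) : ℤ) := by omega
  have h2 : p ≤ e.natAbs := by omega
  rw [h1]
  exact cfilt_le va M p e.natAbs hp h2 (mem_cfilt_gen va M e.natAbs v w)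

private lemma act_stab (p : ℕ) (hp : 1 ≤ p) (u : V) (e : ℤ) (he : e ≤ -1) {x : W}
    (hx : x ∈ Cfilt M p) : M.act u e x ∈ Cfilt M p := by
  have hle : Cfilt M p ≤ Submodule.comap (M.act u e) (Cfilt M p) := by
    refine Submodule.span_le.mpr ?_
    rintro y ⟨v, w, rfl⟩
    simp only [SetLike.mem_coe, Submodule.mem_comap]
    have hc := M.commutator u v w e (-(p : ℤ))
    rw [eq_add_of_sub_eq hc]
    refine Submodule.add_mem _ (finsum_mem' _ _ fun i => ?_) (mem_cfilt_gen va M p v _)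
    exact zsmul_mem' _ _ (act_mode_mem va M p hp _ _ (by omega) w)
  exact hle hx

private lemma miracle (p : ℕ) (hp : 2 ≤ p) (u v : V) (w : W) :
    M.act u (-(p : ℤ)) (M.act v (-(p : ℤ)) w) ∈ Cfilt M (p + 1) := by
  obtain ⟨Nv, hNv⟩ := M.trunc v w
  obtain ⟨Nu, hNu⟩ := M.trunc u w
  have h := M.iterate u v w (-1) (1 - 2 * (p : ℤ))
  have key := finsum_single_mem
    (fun i : ℕ => ((-1 : ℤ) ^ i * intBinom (-1) i) •
      (M.act u (-1 - (i : ℤ)) (M.act v (1 - 2 * (p : ℤ) + (i : ℤ)) w) -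
        ((((-1 : ℤˣ) ^ (-1 : ℤ) : ℤˣ) : ℤ) •
          M.act v (-1 + (1 - 2 * (p : ℤ)) - (i : ℤ)) (M.act u (i : ℤ) w))))
    (Cfilt M (p + 1)) (Nv + Nu + 2 * p + 2) (p - 1) (by omega) ?_ ?_ ?_
  · rw [intBinom_neg_one, ← pow_add, Even.neg_one_pow ⟨p - 1, by ring⟩, one_smul] at key
    have hY : M.act v (-1 + (1 - 2 * (p : ℤ)) - ((p - 1 : ℕ) : ℤ))
        (M.act u ((p - 1 : ℕ) : ℤ) w) ∈ Cfilt M (p + 1) :=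
      act_mode_mem va M (p + 1) (by omega) v _ (by push_cast; omega) _
    have hX := Submodule.add_mem _ key (zsmul_mem' _ ((((-1 : ℤˣ) ^ (-1 : ℤ) : ℤˣ) : ℤ)) hY)
    rw [sub_add_cancel] at hX
    rw [show (-1 - ((p - 1 : ℕ) : ℤ)) = -(p : ℤ) by omega,
      show (1 - 2 * (p : ℤ) + ((p - 1 : ℕ) : ℤ)) = -(p : ℤ) by omega] at hX
    exact hX
  · intro i hi
    rw [hNv (1 - 2 * (p : ℤ) + (i : ℤ)) (by omega), hNu (i : ℤ) (by omega)]
    simp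
  · intro i hi
    refine zsmul_mem' _ _ (sub_mem ?_ (zsmul_mem' _ _
      (act_mode_mem va M (p + 1) (by omega) v _ (by push_cast; omega) _)))
    rcases lt_or_gt_of_ne hi with hlt | hgt
    · exact act_stab va M (p + 1) (by omega) u _ (by omega)
        (act_mode_mem va M (p + 1) (by omega) v _ (by push_cast; omega) w)
    · exact act_mode_mem va M (p + 1) (by omega) u _ (by push_cast; omega) _
  · rw [← h]
    exact act_mode_mem va M (p + 1) (by omega) _ _ (by push_cast; omega) w

private lemma deep_head (p : ℕ) (hp : 2 ≤ p) (z q : V) (x : W) :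
    M.act (va.Y z (-(p : ℤ)) q) (-(p : ℤ)) x ∈ Cfilt M (p + 1) := by
  rw [M.iterate z q x (-(p : ℤ)) (-(p : ℤ))]
  refine finsum_mem' _ _ fun i => ?_
  refine zsmul_mem' _ _ (sub_mem ?_ (zsmul_mem' _ _
    (act_mode_mem va M (p + 1) (by omega) q _ (by push_cast; omega) _)))
  rcases Nat.eq_zero_or_pos i with h0 | h1
  · subst h0
    simp only [Nat.cast_zero, sub_zero, add_zero]
    exact miracle va M p hp z q x
  · exact act_mode_mem va M (p + 1) (by omega) z _ (by push_cast; omega) _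

private lemma act_cfiltV (p : ℕ) (hp : 2 ≤ p) {c : V} (hc : c ∈ Cfilt va.adjoint p) (x : W) :
    M.act c (-(p : ℤ)) x ∈ Cfilt M (p + 1) := by
  let φ : V →ₗ[ℂ] W :=
    (LinearMap.applyₗ x).comp ((LinearMap.proj (-(p : ℤ))).comp M.act)
  have hle : Cfilt va.adjoint p ≤ Submodule.comap φ (Cfilt M (p + 1)) := by
    refine Submodule.span_le.mpr ?_
    rintro y ⟨zz, qq, rfl⟩
    simp only [SetLike.mem_coe, Submodule.mem_comap]
    exact deep_head va M p hp zz qq x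
  exact hle hc

private lemma act_cfiltW (p : ℕ) (hp : 2 ≤ p) (v : V) {d : W} (hd : d ∈ Cfilt M p) :
    M.act v (-(p : ℤ)) d ∈ Cfilt M (p + 1) := by
  have hle : Cfilt M p ≤ Submodule.comap (M.act v (-(p : ℤ))) (Cfilt M (p + 1)) := by
    refine Submodule.span_le.mpr ?_
    rintro y ⟨z, w, rfl⟩
    simp only [SetLike.mem_coe, Submodule.mem_comap]
    exact miracle va M p hp v z w
  exact hle hd

private lemma bilin_mem (p : ℕ) (sV : Set V) (sW : Set W) {u : V} {x : W}
    (hu : u ∈ Submodule.span ℂ sV) (hx : x ∈ Submodule.span ℂ sW) :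
    M.act u (-(p : ℤ)) x
      ∈ Submodule.span ℂ (Set.image2 (fun a b => M.act a (-(p : ℤ)) b) sV sW) := by
  set T := Submodule.span ℂ (Set.image2 (fun a b => M.act a (-(p : ℤ)) b) sV sW) with hT
  let QS : Submodule ℂ V :=
    { carrier := {a : V | ∀ b ∈ Submodule.span ℂ sW, M.act a (-(p : ℤ)) b ∈ T}
      add_mem' := by
        intro a a' ha ha' b hb
        have : M.act (a + a') (-(p : ℤ)) b
            = M.act a (-(p : ℤ)) b + M.act a' (-(p : ℤ)) b := by
          rw [map_add]; rfl
        rw [this]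
        exact T.add_mem (ha b hb) (ha' b hb)
      zero_mem' := by
        intro b hb
        have : M.act (0 : V) (-(p : ℤ)) b = 0 := by rw [map_zero]; rfl
        rw [this]
        exact T.zero_mem
      smul_mem' := by
        intro r a ha b hb
        have : M.act (r • a) (-(p : ℤ)) b = r • M.act a (-(p : ℤ)) b := by
          rw [map_smul]; rfl
        rw [this]
        exact T.smul_mem r (ha b hb) }
  have hQ : Submodule.span ℂ sV ≤ QS := by
    refine Submodule.span_le.mpr ?_
    intro a ha
    intro b hb
    have hbs : Submodule.span ℂ sW ≤ Submodule.comap (M.act a (-(p : ℤ))) T := by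
      refine Submodule.span_le.mpr ?_
      intro b' hb'
      exact Submodule.subset_span (Set.mem_image2_of_mem ha hb')
    exact hbs hb
  exact hQ hu x hx

private lemma exists_compl (S : Submodule ℂ W) (h : FiniteDimensional ℂ (W ⧸ S)) :
    ∃ T : Submodule ℂ W, T.FG ∧ T ⊔ S = ⊤ := by
  obtain ⟨s, hs⟩ := Module.finite_def.mp h
  choose g hg using fun y : W ⧸ S => Submodule.mkQ_surjective S y
  refine ⟨Submodule.span ℂ (g '' ↑s), Submodule.fg_span (s.finite_toSet.image g), ?_⟩
  rw [eq_top_iff]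
  intro w _
  have himg : S.mkQ '' (g '' ↑s) = ↑s := by
    rw [Set.image_image]
    have : ∀ y ∈ (↑s : Set (W ⧸ S)), S.mkQ (g y) = y := fun y _ => hg y
    rw [Set.image_congr this]
    exact Set.image_id _
  have hw : S.mkQ w ∈ Submodule.map S.mkQ (Submodule.span ℂ (g '' ↑s)) := by
    rw [Submodule.map_span, himg, hs]
    trivial
  obtain ⟨t, ht, hteq⟩ := hw
  have hsub : w - t ∈ S := by
    rw [← Submodule.Quotient.eq S]
    exact hteq.symm
  exact Submodule.mem_sup.mpr ⟨t, ht, w - t, hsub, by abel⟩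

private lemma findim_of_compl (S T : Submodule ℂ W) (hT : T.FG) (h : T ⊔ S = ⊤) :
    FiniteDimensional ℂ (W ⧸ S) := by
  refine Module.finite_def.mpr ?_
  have h2 : Submodule.map S.mkQ S = ⊥ := by
    rw [eq_bot_iff]
    rintro y hy
    obtain ⟨z, hz, rfl⟩ := hy
    simpa using (Submodule.Quotient.mk_eq_zero S).mpr hz
  have h1 : Submodule.map S.mkQ T = ⊤ := by
    have htop : Submodule.map S.mkQ (T ⊔ S) = ⊤ := by
      rw [h, Submodule.map_top, Submodule.range_mkQ]
    rwa [Submodule.map_sup, h2, sup_bot_eq] at htop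
  rw [← h1]
  exact hT.map _

private lemma main_step (p : ℕ) (hp : 2 ≤ p)
    (hVp : ∃ T : Submodule ℂ V, T.FG ∧ T ⊔ Cfilt va.adjoint p = ⊤)
    (hWp : ∃ T : Submodule ℂ W, T.FG ∧ T ⊔ Cfilt M p = ⊤) :
    ∃ T : Submodule ℂ W, T.FG ∧ T ⊔ Cfilt M (p + 1) = ⊤ := by
  obtain ⟨TV, hTVfg, hTV⟩ := hVp
  obtain ⟨TW, hTWfg, hTW⟩ := hWp
  obtain ⟨sV, hsV⟩ := hTVfg
  obtain ⟨sW, hsW⟩ := hTWfg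
  refine ⟨TW ⊔ Submodule.span ℂ (Set.image2 (fun a b => M.act a (-(p : ℤ)) b) ↑sV ↑sW),
    (Submodule.FG.sup ⟨sW, hsW⟩
      (Submodule.fg_span (Set.Finite.image2 _ sV.finite_toSet sW.finite_toSet))), ?_⟩
  rw [eq_top_iff, ← hTW]
  refine sup_le (le_trans le_sup_left le_sup_left) ?_
  refine Submodule.span_le.mpr ?_
  rintro y ⟨v, w, rfl⟩
  have hw : w ∈ TW ⊔ Cfilt M p := hTW.symm ▸ Submodule.mem_top
  obtain ⟨xw, hxw, dw, hdw, rfl⟩ := Submodule.mem_sup.mp hw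
  have hsplit : M.act v (-(p : ℤ)) (xw + dw)
      = M.act v (-(p : ℤ)) xw + M.act v (-(p : ℤ)) dw := map_add _ _ _
  rw [SetLike.mem_coe, hsplit]
  refine Submodule.add_mem _ ?_
    (Submodule.mem_sup_right (act_cfiltW va M p hp v hdw))
  have hv : v ∈ TV ⊔ Cfilt va.adjoint p := hTV.symm ▸ Submodule.mem_top
  obtain ⟨uv, huv, cv, hcv, rfl⟩ := Submodule.mem_sup.mp hv
  have hsplit2 : M.act (uv + cv) (-(p : ℤ)) xw
      = M.act uv (-(p : ℤ)) xw + M.act cv (-(p : ℤ)) xw := by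
    rw [map_add]; rfl
  rw [hsplit2]
  refine Submodule.add_mem _ ?_
    (Submodule.mem_sup_right (act_cfiltV va M p hp hcv xw))
  have hu' : uv ∈ Submodule.span ℂ (↑sV : Set V) := by rw [hsV]; exact huv
  have hx' : xw ∈ Submodule.span ℂ (↑sW : Set W) := by rw [hsW]; exact hxw
  exact Submodule.mem_sup_left (Submodule.mem_sup_right (bilin_mem va M p _ _ hu' hx'))

end CnHelpers

/-- **Proposition 4.5 (pmodule-cn).** Let `V` be any vertex algebra and `W` any
`V`-module. If `V` and `W` are `C₂`-cofinite, then `W` is `C_n`-cofinite for all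
`n ≥ 2`. -/
theorem stmt17 {V : Type*} [AddCommGroup V] [Module ℂ V] {W : Type*} [AddCommGroup W]
    [Module ℂ W] (va : VertexAlgebra V) (M : VAModule va W)
    (hV : FiniteDimensional ℂ (V ⧸ Cfilt va.adjoint 2))
    (hW : FiniteDimensional ℂ (W ⧸ Cfilt M 2)) :
    ∀ n : ℕ, 2 ≤ n → FiniteDimensional ℂ (W ⧸ Cfilt M n) := by
  intro n hn
  have key : ∀ m : ℕ, 2 ≤ m →
      (∃ T : Submodule ℂ V, T.FG ∧ T ⊔ Cfilt va.adjoint m = ⊤) ∧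
      (∃ T : Submodule ℂ W, T.FG ∧ T ⊔ Cfilt M m = ⊤) := by
    intro m hm
    induction m, hm using Nat.le_induction with
    | base => exact ⟨exists_compl _ hV, exists_compl _ hW⟩
    | succ k hk ih =>
      exact ⟨main_step va va.adjoint k hk ih.1 ih.1, main_step va M k hk ih.1 ih.2⟩
  obtain ⟨T, hTfg, hT⟩ := (key n hn).2
  exact findim_of_compl _ T hTfg hT

end
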